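/- arXiv:1302.0049 — 2 statements merged into one kernel-verified Lean document; each statement's English description precedes it below -/
import Mathlib

section
/- The group P = ⟨a, b ∣ a b² a⁻¹ b², b a² b⁻¹ a²⟩ (the Promislow/Passman group) is torsion-free. -/
/-- The relations of the Promislow group `P = ⟨a, b ∣ a b² a⁻¹ b², b a² b⁻¹ a²⟩`,
where `a` is `FreeGroup.of 0` and `b` is `FreeGroup.of 1`. -/
def promislowRels : Set (FreeGroup (Fin 2)) :=
  { FreeGroup.of 0 * (FreeGroup.of 1) ^ 2 * (FreeGroup.of 0)⁻¹ * (FreeGroup.of 1) ^ 2,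
    FreeGroup.of 1 * (FreeGroup.of 0) ^ 2 * (FreeGroup.of 1)⁻¹ * (FreeGroup.of 0) ^ 2 }

/-- The Promislow/Passman group. -/
abbrev PromislowGroup : Type := PresentedGroup promislowRels

/-- A monoid is torsion-free if no nontrivial element has finite order
(the definition of `Monoid.IsTorsionFree` in the older Mathlib, since removed). -/
def Monoid.IsTorsionFree (G : Type*) [Monoid G] : Prop :=
  ∀ g : G, g ≠ 1 → ¬IsOfFinOrder g

/-!
The squares `x = a²`, `y = b²`, `z = (ab)²` commute pairwise, and conjugation by `a` or `b` inverts
two of them and fixes the third. Hence every element of `P` is `h xⁱ yʲ zᵏ` with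
`h ∈ {1, a, b, ab}`. Its square is `xⁱ' yʲ' zᵏ'`, where `(i', j', k') = 2 (i, j, k)` if `h = 1`
and otherwise has an odd coordinate (for instance `(a xⁱ yʲ zᵏ)² = x^(2i+1)`); so `(i', j', k') ≠ 0`
unless the element is `1`. Finally, `P` acts on `ℤ³` with `xⁱ yʲ zᵏ` acting as the translation by
`2 (i, j, k)`, so these elements have infinite order.
-/

theorem commute_sq_of_mul_mul_inv_eq_inv {G : Type*} [Group G] {c g : G}
    (h : c * g * c⁻¹ = g⁻¹) : Commute (c ^ 2) g := by
  rw [commute_iff_eq, sq]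
  calc c * c * g = c * (c * g * c⁻¹) * c := by group
    _ = c * g⁻¹ * c⁻¹ * (c * c) := by rw [h]; group
    _ = (c * g * c⁻¹)⁻¹ * (c * c) := by group
    _ = g * (c * c) := by rw [h, inv_inv]

theorem eq_zero_of_isOfFinOrder_addLeft {A : Type*} [AddGroup A] [IsAddTorsionFree A] {c : A}
    (h : IsOfFinOrder (Equiv.addLeft c)) : c = 0 := by
  obtain ⟨n, hn, hc⟩ := h.exists_pow_eq_one
  rw [Equiv.nsmul_addLeft] at hc
  have hnc : n • c = 0 := by simpa using congr($hc 0)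
  exact (nsmul_eq_zero_iff_right hn.ne').mp hnc

namespace PromislowGroup

def a : PromislowGroup := PresentedGroup.of 0
def b : PromislowGroup := PresentedGroup.of 1
def x : PromislowGroup := a ^ 2
def y : PromislowGroup := b ^ 2
def z : PromislowGroup := (a * b) ^ 2

lemma a_mul_y_mul_inv : a * y * a⁻¹ = y⁻¹ := by
  have h := PresentedGroup.one_of_mem (rels := promislowRels) (Set.mem_insert _ _)
  simp only [map_mul, map_pow, map_inv] at h
  exact eq_inv_of_mul_eq_one_left h

lemma b_mul_x_mul_inv : b * x * b⁻¹ = x⁻¹ := by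
  have h := PresentedGroup.one_of_mem (rels := promislowRels) (Set.mem_insert_of_mem _ rfl)
  simp only [map_mul, map_pow, map_inv] at h
  exact eq_inv_of_mul_eq_one_left h

lemma a_mul_z_mul_inv : a * z * a⁻¹ = z⁻¹ := by
  refine eq_inv_of_mul_eq_one_left ?_
  calc a * z * a⁻¹ * z = x * b * (a * y * a⁻¹) * x * b := by simp only [x, y, z, sq]; group
    _ = b⁻¹ * (b * x * b⁻¹) * x * b := by rw [a_mul_y_mul_inv]; simp only [y, sq]; group
    _ = 1 := by rw [b_mul_x_mul_inv]; group

lemma commute_x_y : Commute x y := commute_sq_of_mul_mul_inv_eq_inv a_mul_y_mul_inv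

lemma commute_x_z : Commute x z := commute_sq_of_mul_mul_inv_eq_inv a_mul_z_mul_inv

lemma b_mul_z_mul_inv : b * z * b⁻¹ = z⁻¹ :=
  calc b * z * b⁻¹ = a⁻¹ * (x * z * x⁻¹) * a := by
        rw [commute_x_z.mul_inv_cancel]; simp only [z, sq]; group
    _ = a * z * a⁻¹ := by simp only [x]; group
    _ = z⁻¹ := a_mul_z_mul_inv

lemma commute_y_z : Commute y z := commute_sq_of_mul_mul_inv_eq_inv b_mul_z_mul_inv

def translation (v : ℤ × ℤ × ℤ) : PromislowGroup := x ^ v.1 * y ^ v.2.1 * z ^ v.2.2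

lemma translation_zero : translation 0 = 1 := by simp [translation]

lemma translation_add (v w : ℤ × ℤ × ℤ) :
    translation (v + w) = translation v * translation w := by
  obtain ⟨i, j, k⟩ := v
  obtain ⟨i', j', k'⟩ := w
  simp only [translation, Prod.mk_add_mk, zpow_add, mul_assoc]
  congr 1
  rw [(commute_x_y.zpow_zpow i' j).left_comm, ← (commute_x_z.zpow_zpow i' k).left_comm,
    (commute_y_z.zpow_zpow j' k).left_comm]

lemma a_mul_translation_mul_inv (i j k : ℤ) :
    a * translation (i, j, k) * a⁻¹ = translation (i, -j, -k) := by
  simp only [translation, ← MulAut.conj_apply, map_mul, map_zpow]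
  simp only [MulAut.conj_apply, a_mul_y_mul_inv, a_mul_z_mul_inv, inv_zpow', x]
  group

lemma b_mul_translation_mul_inv (i j k : ℤ) :
    b * translation (i, j, k) * b⁻¹ = translation (-i, j, -k) := by
  simp only [translation, ← MulAut.conj_apply, map_mul, map_zpow]
  simp only [MulAut.conj_apply, b_mul_x_mul_inv, b_mul_z_mul_inv, inv_zpow', y]
  group

lemma translation_mul_a (i j k : ℤ) : translation (i, j, k) * a = a * translation (i, -j, -k) := by
  rw [← eq_mul_inv_iff_mul_eq, a_mul_translation_mul_inv, neg_neg, neg_neg]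

lemma translation_mul_b (i j k : ℤ) : translation (i, j, k) * b = b * translation (-i, j, -k) := by
  rw [← eq_mul_inv_iff_mul_eq, b_mul_translation_mul_inv, neg_neg, neg_neg]

def cosetRep : Bool × Bool → PromislowGroup
  | (false, false) => 1
  | (true, false) => a
  | (false, true) => b
  | (true, true) => a * b

def signFlip : Bool × Bool → ℤ × ℤ × ℤ → ℤ × ℤ × ℤ
  | (false, false), v => v
  | (true, false), (i, j, k) => (i, -j, -k)
  | (false, true), (i, j, k) => (-i, j, -k)
  | (true, true), (i, j, k) => (-i, -j, k)

lemma translation_mul_cosetRep (v : ℤ × ℤ × ℤ) (t : Bool × Bool) :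
    translation v * cosetRep t = cosetRep t * translation (signFlip t v) := by
  obtain ⟨i, j, k⟩ := v
  obtain ⟨_ | _, _ | _⟩ := t
  · simp [cosetRep, signFlip]
  · exact translation_mul_b i j k
  · exact translation_mul_a i j k
  · rw [cosetRep, signFlip, ← mul_assoc, translation_mul_a, mul_assoc, translation_mul_b, neg_neg,
      mul_assoc]

lemma x_eq_translation : x = translation (1, 0, 0) := by simp [translation]

lemma y_eq_translation : y = translation (0, 1, 0) := by simp [translation]

lemma z_eq_translation : z = translation (0, 0, 1) := by simp [translation]

lemma a_mul_cosetRep (t : Bool × Bool) :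
    ∃ t' c, a * cosetRep t = cosetRep t' * translation c := by
  obtain ⟨_ | _, _ | _⟩ := t
  · exact ⟨(true, false), 0, by simp [cosetRep, translation_zero]⟩
  · exact ⟨(true, true), 0, by simp [cosetRep, translation_zero]⟩
  · refine ⟨(false, false), (1, 0, 0), ?_⟩
    rw [cosetRep, cosetRep, ← sq, ← x_eq_translation, one_mul]
    rfl
  · refine ⟨(false, true), (-1, 0, 0), ?_⟩
    calc a * cosetRep (true, true) = translation (1, 0, 0) * b := by
          rw [cosetRep, ← mul_assoc, ← sq, ← x_eq_translation]; rfl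
      _ = _ := by rw [translation_mul_b, neg_zero]; rfl

lemma b_mul_cosetRep (t : Bool × Bool) :
    ∃ t' c, b * cosetRep t = cosetRep t' * translation c := by
  obtain ⟨_ | _, _ | _⟩ := t
  · exact ⟨(false, true), 0, by simp [cosetRep, translation_zero]⟩
  · refine ⟨(false, false), (0, 1, 0), ?_⟩
    rw [cosetRep, cosetRep, ← sq, ← y_eq_translation, one_mul]
    rfl
  · refine ⟨(true, true), (1, -1, -1), ?_⟩
    calc b * a = a * (x⁻¹ * z * y⁻¹) * b := by simp only [x, y, z, sq]; group
      _ = a * translation (-1, -1, 1) * b := by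
          rw [mul_assoc x⁻¹, (commute_y_z.symm.inv_right).eq]; simp [translation, mul_assoc]
      _ = a * b * translation (1, -1, -1) := by
          rw [mul_assoc, translation_mul_b, neg_neg, ← mul_assoc]
  · refine ⟨(true, false), (-1, 0, 1), ?_⟩
    calc b * (a * b) = a * (x⁻¹ * z) := by simp only [x, z, sq]; group
      _ = _ := by simp [cosetRep, translation]

lemma closure_a_b : Subgroup.closure {a, b} = ⊤ := by
  rw [← PresentedGroup.closure_range_of]
  congr 1
  ext g
  simp [Fin.exists_fin_two, a, b, eq_comm]

lemma exists_eq_cosetRep_mul_translation (g : PromislowGroup) :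
    ∃ t v, g = cosetRep t * translation v := by
  have closed_of_mul_cosetRep (h : PromislowGroup)
      (hh : ∀ t, ∃ t' c, h * cosetRep t = cosetRep t' * translation c) (g : PromislowGroup) :
      (∃ t v, g = cosetRep t * translation v) → ∃ t v, h * g = cosetRep t * translation v := by
    rintro ⟨t, v, rfl⟩
    obtain ⟨t', c, hc⟩ := hh t
    exact ⟨t', c + v, by rw [← mul_assoc, hc, mul_assoc, translation_add]⟩
  have closed_of_translation (w : ℤ × ℤ × ℤ) := closed_of_mul_cosetRep (translation w)
    fun t ↦ ⟨t, _, translation_mul_cosetRep w t⟩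
  have a_inv : a⁻¹ = a * translation (-1, 0, 0) := by simp [translation, x, sq]
  have b_inv : b⁻¹ = b * translation (0, -1, 0) := by simp [translation, y, sq]
  have hg : g ∈ Subgroup.closure {a, b} := closure_a_b ▸ Subgroup.mem_top g
  induction hg using Subgroup.closure_induction_left with
  | one => exact ⟨(false, false), 0, by simp [cosetRep, translation_zero]⟩
  | mul_left _ hs _ _ ih =>
    rcases hs with rfl | rfl
    · exact closed_of_mul_cosetRep a a_mul_cosetRep _ ih
    · exact closed_of_mul_cosetRep b b_mul_cosetRep _ ih
  | inv_mul_cancel _ hs _ _ ih =>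
    rcases hs with rfl | rfl
    · rw [a_inv, mul_assoc]
      exact closed_of_mul_cosetRep a a_mul_cosetRep _ (closed_of_translation _ _ ih)
    · rw [b_inv, mul_assoc]
      exact closed_of_mul_cosetRep b b_mul_cosetRep _ (closed_of_translation _ _ ih)

lemma sq_cosetRep_mul_translation (t : Bool × Bool) (v : ℤ × ℤ × ℤ) :
    (cosetRep t * translation v) ^ 2 = cosetRep t ^ 2 * translation (signFlip t v + v) := by
  rw [sq, sq, translation_add, mul_assoc, ← mul_assoc (translation v), translation_mul_cosetRep]
  simp only [mul_assoc]

lemma exists_ne_zero_sq_eq_translation {g : PromislowGroup} (hg : g ≠ 1) :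
    ∃ w ≠ 0, g ^ 2 = translation w := by
  obtain ⟨t, ⟨i, j, k⟩, rfl⟩ := exists_eq_cosetRep_mul_translation g
  rw [sq_cosetRep_mul_translation]
  obtain ⟨_ | _, _ | _⟩ := t
  · refine ⟨(i + i, j + j, k + k), ?_, by simp [cosetRep, signFlip]⟩
    intro h
    obtain ⟨rfl, rfl, rfl⟩ : i = 0 ∧ j = 0 ∧ k = 0 := by simp [Prod.ext_iff] at h; omega
    simp [cosetRep, translation] at hg
  · refine ⟨(0, 2 * j + 1, 0), by simp [Prod.ext_iff]; omega, ?_⟩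
    rw [cosetRep, ← y, y_eq_translation, ← translation_add]
    congr 1
    simp [signFlip, Prod.ext_iff]
    omega
  · refine ⟨(2 * i + 1, 0, 0), by simp [Prod.ext_iff]; omega, ?_⟩
    rw [cosetRep, ← x, x_eq_translation, ← translation_add]
    congr 1
    simp [signFlip, Prod.ext_iff]
    omega
  · refine ⟨(0, 0, 2 * k + 1), by simp [Prod.ext_iff]; omega, ?_⟩
    rw [cosetRep, ← z, z_eq_translation, ← translation_add]
    congr 1
    simp [signFlip, Prod.ext_iff]
    omega

/- `a` and `b` act on `ℝ³` as the screw motions `(x + ½, -y, -z)` and `(-x, y + ½, -z - ½)` of the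
Hantzsche–Wendt manifold, whose fundamental group is `P`; rescaled by `2`, they act on `ℤ³`. -/
@[simps]
def affineA : Equiv.Perm (ℤ × ℤ × ℤ) where
  toFun v := (v.1 + 1, -v.2.1, -v.2.2)
  invFun v := (v.1 - 1, -v.2.1, -v.2.2)
  left_inv v := by simp
  right_inv v := by simp

@[simps]
def affineB : Equiv.Perm (ℤ × ℤ × ℤ) where
  toFun v := (-v.1, v.2.1 + 1, -v.2.2 - 1)
  invFun v := (-v.1, v.2.1 - 1, -v.2.2 - 1)
  left_inv v := by simp
  right_inv v := by simp

lemma lift_affine_eq_one_of_mem_rels :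
    ∀ r ∈ promislowRels, FreeGroup.lift ![affineA, affineB] r = 1 := by
  rintro r (rfl | rfl) <;> ext ⟨i, j, k⟩ <;> simp [sq]

def toPerm : PromislowGroup →* Equiv.Perm (ℤ × ℤ × ℤ) :=
  PresentedGroup.toGroup lift_affine_eq_one_of_mem_rels

lemma toPerm_a : toPerm a = affineA := PresentedGroup.toGroup.of _

lemma toPerm_b : toPerm b = affineB := PresentedGroup.toGroup.of _

lemma toPerm_translation (v : ℤ × ℤ × ℤ) : toPerm (translation v) = Equiv.addLeft (2 • v) := by
  have hx : toPerm x = Equiv.addLeft (2, 0, 0) := by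
    ext ⟨i, j, k⟩ <;> simp [x, sq, toPerm_a]
    ring
  have hy : toPerm y = Equiv.addLeft (0, 2, 0) := by
    ext ⟨i, j, k⟩ <;> simp [y, sq, toPerm_b]
    ring
  have hz : toPerm z = Equiv.addLeft (0, 0, 2) := by
    ext ⟨i, j, k⟩ <;> simp [z, sq, toPerm_a, toPerm_b]
    ring
  obtain ⟨i, j, k⟩ := v
  simp only [translation, map_mul, map_zpow, hx, hy, hz, Equiv.zsmul_addLeft, ← Equiv.addLeft_add]
  congr 1
  ext <;> simp <;> ring

lemma eq_zero_of_isOfFinOrder_translation {w : ℤ × ℤ × ℤ} (h : IsOfFinOrder (translation w)) :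
    w = 0 := by
  have h2w := eq_zero_of_isOfFinOrder_addLeft (toPerm_translation w ▸ toPerm.isOfFinOrder h)
  exact two_nsmul_eq_zero.mp h2w

end PromislowGroup

/-- The Promislow group `P = ⟨a, b ∣ a b² a⁻¹ b², b a² b⁻¹ a²⟩` is torsion-free. -/
theorem promislowGroup_isTorsionFree : Monoid.IsTorsionFree PromislowGroup := by
  intro g hg hfin
  obtain ⟨w, hw, hsq⟩ := PromislowGroup.exists_ne_zero_sq_eq_translation hg
  exact hw (PromislowGroup.eq_zero_of_isOfFinOrder_translation (hsq ▸ hfin.pow))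
end

section
/- In the Promislow group P = ⟨a, b ∣ a b² a⁻¹ b², b a² b⁻¹ a²⟩, the elements a² and b² commute, and in fact ⟨a², b²⟩ is a subgroup isomorphic to ℤ². -/
/-- The generator `a` of the Promislow group. -/
def pa : PromislowGroup := PresentedGroup.of 0

/-- The generator `b` of the Promislow group. -/
def pb : PromislowGroup := PresentedGroup.of 1

namespace Commute

variable {G : Type*} [Group G]

theorem sq_left_of_mul_mul_inv_eq_inv {x z : G} (h : x * z * x⁻¹ = z⁻¹) :
    Commute (x ^ 2) z := by
  have hconj : x ^ 2 * z * (x ^ 2)⁻¹ = z := calc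
    x ^ 2 * z * (x ^ 2)⁻¹ = x * (x * z * x⁻¹) * x⁻¹ := by rw [sq]; group
    _ = x * z⁻¹ * x⁻¹ := by rw [h]
    _ = (x * z * x⁻¹)⁻¹ := by group
    _ = z := by rw [h, inv_inv]
  exact mul_inv_eq_iff_eq_mul.mp hconj

variable {x y : G}

def zpowersCoprod (hxy : Commute x y) : Multiplicative ℤ × Multiplicative ℤ →* G :=
  (zpowersHom G x).noncommCoprod (zpowersHom G y) fun m n => by
    rw [zpowersHom_apply, zpowersHom_apply]; exact hxy.zpow_zpow _ _

theorem range_zpowersCoprod (hxy : Commute x y) :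
    hxy.zpowersCoprod.range = Subgroup.closure {x, y} := by
  refine (MonoidHom.noncommCoprod_range _ _ _).trans ?_
  rw [Subgroup.range_zpowersHom, Subgroup.range_zpowersHom, Subgroup.zpowers_eq_closure,
    Subgroup.zpowers_eq_closure, ← Subgroup.closure_union, Set.singleton_union]

theorem zpowersCoprod_injective {H₁ H₂ : Type*} [Group H₁] [Group H₂] (hxy : Commute x y)
    (f₁ : G →* H₁) (f₂ : G →* H₂) (hy : f₁ y = 1) (hx : f₂ x = 1)
    (hfx : ¬IsOfFinOrder (f₁ x)) (hfy : ¬IsOfFinOrder (f₂ y)) :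
    Function.Injective hxy.zpowersCoprod := by
  rw [injective_iff_map_eq_one]
  rintro ⟨m, n⟩ h
  have h₁ := congrArg f₁ h
  have h₂ := congrArg f₂ h
  simp only [zpowersCoprod, MonoidHom.noncommCoprod_apply, zpowersHom_apply, map_mul, map_zpow,
    hx, hy, one_zpow, mul_one, one_mul, map_one] at h₁ h₂
  have hm := injective_zpow_iff_not_isOfFinOrder.mpr hfx (h₁.trans (zpow_zero _).symm)
  have hn := injective_zpow_iff_not_isOfFinOrder.mpr hfy (h₂.trans (zpow_zero _).symm)
  rw [Prod.mk_eq_one]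
  exact ⟨toAdd_eq_zero.mp hm, toAdd_eq_zero.mp hn⟩

theorem nonempty_closure_pair_mulEquiv {H₁ H₂ : Type*} [Group H₁] [Group H₂] (hxy : Commute x y)
    (f₁ : G →* H₁) (f₂ : G →* H₂) (hy : f₁ y = 1) (hx : f₂ x = 1)
    (hfx : ¬IsOfFinOrder (f₁ x)) (hfy : ¬IsOfFinOrder (f₂ y)) :
    Nonempty (Subgroup.closure {x, y} ≃* Multiplicative (ℤ × ℤ)) :=
  ⟨(MulEquiv.subgroupCongr hxy.range_zpowersCoprod.symm).trans <|
    (MonoidHom.ofInjective (hxy.zpowersCoprod_injective f₁ f₂ hy hx hfx hfy)).symm.trans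
      (MulEquiv.prodMultiplicative ℤ ℤ).symm⟩

end Commute

namespace DihedralGroup

variable {n : ℕ}

theorem sr_sq (i : ZMod n) : sr i ^ 2 = 1 := by
  rw [sq, sr_mul_self]

theorem sr_mul_r_mul_sr_inv (i j : ZMod n) : sr i * r j * (sr i)⁻¹ = (r j)⁻¹ := by
  simp

theorem not_isOfFinOrder_r_one_pow {k : ℕ} (hk : k ≠ 0) :
    ¬IsOfFinOrder ((r 1 : DihedralGroup 0) ^ k) := by
  rw [isOfFinOrder_pow, not_or, ← orderOf_eq_zero_iff, orderOf_r_one]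
  exact ⟨rfl, hk⟩

end DihedralGroup

namespace PromislowGroup

variable {H : Type*} [Group H]

theorem pa_mul_pb_sq_mul_pa_inv : pa * pb ^ 2 * pa⁻¹ = (pb ^ 2)⁻¹ := by
  refine eq_inv_of_mul_eq_one_left ?_
  have hrel : PresentedGroup.mk promislowRels
      (.of 0 * .of 1 ^ 2 * (.of 0)⁻¹ * .of 1 ^ 2) = 1 :=
    PresentedGroup.one_of_mem (Set.mem_insert _ _)
  simpa [pa, pb, PresentedGroup.of] using hrel

def lift (x y : H) (h₁ : x * y ^ 2 * x⁻¹ * y ^ 2 = 1) (h₂ : y * x ^ 2 * y⁻¹ * x ^ 2 = 1) :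
    PromislowGroup →* H :=
  PresentedGroup.toGroup (f := ![x, y]) <| by
    rintro r (rfl | rfl) <;> simpa

theorem lift_pa {x y : H} (h₁ : x * y ^ 2 * x⁻¹ * y ^ 2 = 1) (h₂ : y * x ^ 2 * y⁻¹ * x ^ 2 = 1) :
    lift x y h₁ h₂ pa = x :=
  PresentedGroup.toGroup.of _

theorem lift_pb {x y : H} (h₁ : x * y ^ 2 * x⁻¹ * y ^ 2 = 1) (h₂ : y * x ^ 2 * y⁻¹ * x ^ 2 = 1) :
    lift x y h₁ h₂ pb = y :=
  PresentedGroup.toGroup.of _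

theorem relations_of_sq_eq_one_of_conj_eq_inv {x s : H} (hs : s ^ 2 = 1)
    (hx : s * x * s⁻¹ = x⁻¹) : x * s ^ 2 * x⁻¹ * s ^ 2 = 1 ∧ s * x ^ 2 * s⁻¹ * x ^ 2 = 1 := by
  refine ⟨by rw [hs]; group, ?_⟩
  rw [show s * x ^ 2 * s⁻¹ = (s * x * s⁻¹) ^ 2 by simp only [sq]; group, hx]
  group

end PromislowGroup

/-- In the Promislow group, `a²` and `b²` commute, and the subgroup they generate is
isomorphic to `ℤ²`. -/
theorem promislow_sq_commute_and_closure_iso_Z2 :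
    Commute (pa ^ 2) (pb ^ 2) ∧
      Nonempty ((Subgroup.closure {pa ^ 2, pb ^ 2} : Subgroup PromislowGroup) ≃*
        Multiplicative (ℤ × ℤ)) := by
  have hcomm : Commute (pa ^ 2) (pb ^ 2) :=
    Commute.sq_left_of_mul_mul_inv_eq_inv PromislowGroup.pa_mul_pb_sq_mul_pa_inv
  let r : DihedralGroup 0 := .r 1
  let s : DihedralGroup 0 := .sr 0
  have hs : s ^ 2 = 1 := DihedralGroup.sr_sq 0
  have hrel := PromislowGroup.relations_of_sq_eq_one_of_conj_eq_inv hs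
    (DihedralGroup.sr_mul_r_mul_sr_inv 0 1)
  have hr : ¬IsOfFinOrder (r ^ 2) := DihedralGroup.not_isOfFinOrder_r_one_pow two_ne_zero
  refine ⟨hcomm, hcomm.nonempty_closure_pair_mulEquiv
    (PromislowGroup.lift r s hrel.1 hrel.2) (PromislowGroup.lift s r hrel.2 hrel.1) ?_ ?_ ?_ ?_⟩
  · rwa [map_pow, PromislowGroup.lift_pb]
  · rwa [map_pow, PromislowGroup.lift_pa]
  · rwa [map_pow, PromislowGroup.lift_pa]
  · rwa [map_pow, PromislowGroup.lift_pb]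
end
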